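/- The characteristic polynomial of T·R equals (X−1)³ (so 1 is its only eigenvalue), and the eigenspace of T·R for eigenvalue 1, i.e. the kernel of the linear map T·R − I on ℝ³, is the one-dimensional subspace spanned by u = (1,-2,1). Similarly, the characteristic polynomial of T·R⁻¹ equals (X−1)³, and the kernel of T·R⁻¹ − I is the one-dimensional subspace spanned by v = (1,0,3). -/

import Mathlib

open Matrix Polynomial

/-- The matrix `R`. -/
def R : Matrix (Fin 3) (Fin 3) ℝ := !![0,0,-1; 1,0,-1; 0,1,-1]

/-- The matrix `T`. -/
def T : Matrix (Fin 3) (Fin 3) ℝ := !![-1,0,0; 2,1,0; -4,0,1]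

lemma Rinv : R⁻¹ = !![-1,1,0; -1,0,1; -1,0,0] := by
  apply inv_eq_right_inv
  ext i j
  fin_cases i <;> fin_cases j <;>
    simp [R, Matrix.mul_apply, Fin.sum_univ_three, Matrix.vecHead, Matrix.vecTail, Matrix.one_apply, Fin.ext_iff]

lemma TR : T * R = !![0,0,1; 1,0,-3; 0,1,3] := by
  ext i j
  fin_cases i <;> fin_cases j <;>
    norm_num [T, R, Matrix.mul_apply, Fin.sum_univ_three, Matrix.vecHead, Matrix.vecTail, Matrix.cons_val_two]

lemma TRi : T * R⁻¹ = !![1,-1,0; -3,2,1; 3,-4,0] := by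
  rw [Rinv]
  ext i j
  fin_cases i <;> fin_cases j <;>
    norm_num [T, Matrix.mul_apply, Fin.sum_univ_three, Matrix.vecHead, Matrix.vecTail, Matrix.cons_val_two]

lemma charpoly_eq (M : Matrix (Fin 3) (Fin 3) ℝ) :
    M.charpoly = (X - C (M 0 0)) * ((X - C (M 1 1)) * (X - C (M 2 2)) - C (M 1 2) * C (M 2 1))
      - C (M 0 1) * (C (M 1 0) * (X - C (M 2 2)) + C (M 1 2) * C (M 2 0))
      - C (M 0 2) * (C (M 1 0) * C (M 2 1) + (X - C (M 1 1)) * C (M 2 0)) := by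
  rw [Matrix.charpoly, Matrix.det_fin_three]
  simp [Matrix.charmatrix_apply]
  ring

/-- The characteristic polynomials of `T·R` and `T·R⁻¹` are both `(X−1)³`, and
their eigenspaces for the eigenvalue `1` are spanned by `u = (1,-2,1)` and
`v = (1,0,3)` respectively. -/
theorem charpoly_and_eigenspaces :
    (T * R).charpoly = (X - 1) ^ 3 ∧
    LinearMap.ker (T * R - 1).mulVecLin = Submodule.span ℝ {(![1,-2,1] : Fin 3 → ℝ)} ∧
    (T * R⁻¹).charpoly = (X - 1) ^ 3 ∧
    LinearMap.ker (T * R⁻¹ - 1).mulVecLin = Submodule.span ℝ {(![1,0,3] : Fin 3 → ℝ)} := by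
  refine ⟨?_, ?_, ?_, ?_⟩
  · rw [TR, charpoly_eq]
    norm_num [Matrix.cons_val_zero, Matrix.cons_val_one, Matrix.cons_val_two, map_ofNat]
    ring
  · apply le_antisymm
    · intro x hx
      simp only [LinearMap.mem_ker, Matrix.mulVecLin_apply] at hx
      have h0 := congrFun hx 0
      have h1 := congrFun hx 1
      have h2 := congrFun hx 2
      simp [TR, Matrix.mulVec, dotProduct, Fin.sum_univ_three, Matrix.sub_apply,
        Matrix.one_apply, Fin.ext_iff] at h0 h1 h2
      rw [Submodule.mem_span_singleton]
      refine ⟨x 0, ?_⟩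
      funext i
      fin_cases i <;> simp <;> linarith
    · rw [Submodule.span_le, Set.singleton_subset_iff]
      simp only [SetLike.mem_coe, LinearMap.mem_ker, Matrix.mulVecLin_apply]
      funext i
      fin_cases i <;>
        norm_num [TR, Matrix.mulVec, dotProduct, Fin.sum_univ_three, Matrix.sub_apply,
          Matrix.one_apply, Fin.ext_iff, Matrix.cons_val_two]
  · rw [TRi, charpoly_eq]
    norm_num [Matrix.cons_val_zero, Matrix.cons_val_one, Matrix.cons_val_two, map_ofNat]
    ring
  · apply le_antisymm
    · intro x hx
      simp only [LinearMap.mem_ker, Matrix.mulVecLin_apply] at hx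
      have h0 := congrFun hx 0
      have h1 := congrFun hx 1
      have h2 := congrFun hx 2
      simp [TRi, Matrix.mulVec, dotProduct, Fin.sum_univ_three, Matrix.sub_apply,
        Matrix.one_apply, Fin.ext_iff] at h0 h1 h2
      rw [Submodule.mem_span_singleton]
      refine ⟨x 0, ?_⟩
      funext i
      fin_cases i <;> simp <;> linarith
    · rw [Submodule.span_le, Set.singleton_subset_iff]
      simp only [SetLike.mem_coe, LinearMap.mem_ker, Matrix.mulVecLin_apply]
      funext i
      fin_cases i <;>
        norm_num [TRi, Matrix.mulVec, dotProduct, Fin.sum_univ_three, Matrix.sub_apply,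
          Matrix.one_apply, Fin.ext_iff, Matrix.cons_val_two]
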